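/- arXiv:2404.09224 — 2 statements merged into one kernel-verified Lean document; each statement's English description precedes it below -/
import Mathlib

section
/- Let A be a semiprime unital ring and L ⊆ A a left ideal. Then L is Fredholm if and only if L = Lan(Ran(L)) and Ran(L) has finite length as a right A-module. -/
open MulOpposite Submodule

/-- The length of a module: the supremum of lengths of chains of submodules. -/
noncomputable def mlen (R M : Type*) [Ring R] [AddCommGroup M] [Module R M] : ℕ∞ :=
  (Order.krullDim (Submodule R M)).unbotD 0

/-- A ring is semiprime if it has no nonzero nilpotent (two-sided) ideals;
equivalently, `a A a = 0` implies `a = 0`. -/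
def IsSemiprimeRing (A : Type*) [Ring A] : Prop :=
  ∀ a : A, (∀ x : A, a * x * a = 0) → a = 0

/-- The (left) socle of a ring: the sum of all minimal left ideals. -/
noncomputable def socle (A : Type*) [Ring A] : Submodule A A :=
  sSup {m : Submodule A A | IsAtom m}

/-- An element is Fredholm if its image in `A/soc(A)` is invertible. -/
def IsFredholmElem {A : Type*} [Ring A] (a : A) : Prop :=
  ∃ b : A, a * b - 1 ∈ socle A ∧ b * a - 1 ∈ socle A

/-- A left ideal is Fredholm if it contains a Fredholm element. -/
def IsFredholmLeftIdeal {A : Type*} [Ring A] (L : Submodule A A) : Prop :=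
  ∃ a ∈ L, IsFredholmElem a

/-- The right annihilator of a set, as a right ideal (`Aᵐᵒᵖ`-submodule of `A`). -/
def rAnn {A : Type*} [Ring A] (S : Set A) : Submodule Aᵐᵒᵖ A where
  carrier := {a | ∀ s ∈ S, s * a = 0}
  add_mem' := by intro x y hx hy s hs; rw [Set.mem_setOf_eq] at *; rw [mul_add, hx s hs, hy s hs, add_zero]
  zero_mem' := by intro s _; exact mul_zero s
  smul_mem' := by
    intro c x hx s hs
    show s * (c • x) = 0
    rw [MulOpposite.smul_eq_mul_unop, ← mul_assoc, hx s hs, zero_mul]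

/-- The left annihilator of a set, as a left ideal. -/
def lAnn {A : Type*} [Ring A] (S : Set A) : Submodule A A where
  carrier := {a | ∀ s ∈ S, a * s = 0}
  add_mem' := by intro x y hx hy s hs; rw [Set.mem_setOf_eq] at *; rw [add_mul, hx s hs, hy s hs, add_zero]
  zero_mem' := by intro s _; exact zero_mul s
  smul_mem' := by
    intro c x hx s hs
    show c * x * s = 0
    rw [mul_assoc, hx s hs, mul_zero]

/-!
If `L` contains `a` with `b a ≡ 1` modulo the socle, then `L ⊔ soc(A) = A`, and since the socle
is a sum of minimal left ideals, `L` has a complement `K ≤ soc(A)`. Writing `1 = l + r` with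
`l ∈ L`, `r ∈ K` gives `Ran(L) = rA` and `Lan(Ran(L)) = L`. In a semiprime ring a minimal left
ideal is `Ae` for an idempotent `e`, and then `eA` is a minimal right ideal (both say that the
corner `eAe` is a division ring); hence `xA` has finite length for every `x` in the socle, in
particular `Ran(L) = rA` does.

Conversely, a right ideal of finite length is peeled off one minimal right ideal `fA` at a time,
each `f` idempotent with `Af` minimal, so it is `eA` for an idempotent `e` of the socle. Then
`1 - e ∈ Lan(Ran(L)) = L`, and `(1 - e)² - 1 = -e` lies in the socle.
-/

theorem mlen_eq_length (R M : Type*) [Ring R] [AddCommGroup M] [Module R M] :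
    mlen R M = Module.length R M := by
  rw [mlen, ← Module.coe_length, WithBot.unbotD_coe]

theorem exists_le_sSup_atoms_isCompl {α : Type*} [CompleteLattice α] [IsModularLattice α]
    [IsCompactlyGenerated α] {b : α} (h : b ⊔ sSup {a | IsAtom a} = ⊤) :
    ∃ k ≤ sSup {a | IsAtom a}, IsCompl b k := by
  set c := sSup {a : α | IsAtom a}
  have hc : sSup {a | a ≤ c ∧ IsAtom a} = c :=
    le_antisymm (sSup_le fun a ha => ha.1) (sSup_le fun a ha => le_sSup ⟨le_sSup ha, ha⟩)
  obtain ⟨s, -, hdisj, hsup, -⟩ := exists_sSupIndep_disjoint_sSup_atoms (b ⊓ c) c inf_le_right hc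
  have hk : sSup s ≤ c := hsup ▸ le_sup_right
  refine ⟨sSup s, hk, disjoint_iff.mpr ?_, codisjoint_iff.mpr (eq_top_iff.mpr ?_)⟩
  · rw [← inf_eq_right.mpr hk, ← inf_assoc]
    exact hdisj.eq_bot
  · calc ⊤ = b ⊔ ((b ⊓ c) ⊔ sSup s) := by rw [hsup, h]
      _ ≤ b ⊔ sSup s := by rw [← sup_assoc, sup_inf_self]

theorem IsSemiprimeRing.op {A : Type*} [Ring A] (hA : IsSemiprimeRing A) :
    IsSemiprimeRing Aᵐᵒᵖ := by
  intro a ha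
  refine unop_injective (hA a.unop fun x => op_injective ?_)
  simpa [mul_assoc] using ha (MulOpposite.op x)

theorem IsIdempotentElem.op {M : Type*} [Mul M] {e : M} (he : IsIdempotentElem e) :
    IsIdempotentElem (MulOpposite.op e) := by
  rw [IsIdempotentElem, ← op_mul, he.eq]

theorem IsIdempotentElem.unop {M : Type*} [Mul M] {e : Mᵐᵒᵖ} (he : IsIdempotentElem e) :
    IsIdempotentElem e.unop := by
  rw [IsIdempotentElem, ← unop_mul, he.eq]

section Corner

variable {B : Type*} [Ring B] {e : B}

/-- The corner ring `e B e` is a division ring with identity `e`. -/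
def IsDivisionCorner (e : B) : Prop :=
  e ≠ 0 ∧ ∀ u, e * u = u → u * e = u → u ≠ 0 → ∃ v, v * u = e

theorem IsIdempotentElem.mul_mul_self_left (he : IsIdempotentElem e) (x : B) :
    e * (e * x * e) = e * x * e := by
  rw [← mul_assoc, ← mul_assoc, he.eq]

theorem IsIdempotentElem.mul_mul_self_right (he : IsIdempotentElem e) (x : B) :
    e * x * e * e = e * x * e := by
  rw [mul_assoc, he.eq]

theorem IsDivisionCorner.exists_mul_eq (he : IsIdempotentElem e) (h : IsDivisionCorner e) {u : B}
    (hlu : e * u = u) (hru : u * e = u) (hu : u ≠ 0) : ∃ v, u * v = e := by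
  obtain ⟨v, hv⟩ := h.2 u hlu hru hu
  have hv' : e * v * e * u = e := by rw [mul_assoc _ e u, hlu, mul_assoc, hv, he.eq]
  have hv'0 : e * v * e ≠ 0 := fun h0 => h.1 (by rw [← hv', h0, zero_mul])
  obtain ⟨w, hw⟩ := h.2 _ (he.mul_mul_self_left v) (he.mul_mul_self_right v) hv'0
  have hu_eq : u = w * e := by
    calc u = e * u := hlu.symm
      _ = w * (e * v * e) * u := by rw [hw]
      _ = w * e := by rw [mul_assoc, hv']
  exact ⟨e * v * e, by rw [hu_eq, mul_assoc, he.mul_mul_self_left, hw]⟩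

theorem isDivisionCorner_op_iff (he : IsIdempotentElem e) :
    IsDivisionCorner (op e) ↔ IsDivisionCorner e := by
  constructor
  · intro h
    refine ⟨fun h0 => h.1 (by rw [h0, op_zero]), fun u hlu hru hu => ?_⟩
    obtain ⟨v, hv⟩ := h.exists_mul_eq he.op (u := op u) (by rw [← op_mul, hru])
      (by rw [← op_mul, hlu]) (op_ne_zero_iff u |>.mpr hu)
    exact ⟨v.unop, op_injective (by rw [op_mul, op_unop, hv])⟩
  · intro h
    refine ⟨op_ne_zero_iff e |>.mpr h.1, fun u hlu hru hu => ?_⟩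
    obtain ⟨v, hv⟩ := h.exists_mul_eq he (u := u.unop) (by rw [← unop_op e, ← unop_mul, hru])
      (by rw [← unop_op e, ← unop_mul, hlu]) (unop_ne_zero_iff u |>.mpr hu)
    exact ⟨op v, unop_injective (by rw [unop_mul, unop_op, hv, unop_op])⟩

end Corner

section LeftIdeal

variable {B : Type*} [Ring B] {e : B}

theorem IsIdempotentElem.mem_span_singleton_iff (he : IsIdempotentElem e) {x : B} :
    x ∈ span B {e} ↔ x * e = x := by
  refine ⟨fun h => ?_, fun h => mem_span_singleton.mpr ⟨x, h⟩⟩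
  obtain ⟨a, rfl⟩ := mem_span_singleton.mp h
  rw [smul_eq_mul, mul_assoc, he.eq]

theorem exists_isIdempotentElem_eq_span_of_isAtom (hB : IsSemiprimeRing B)
    {I : Submodule B B} (hI : IsAtom I) : ∃ e, IsIdempotentElem e ∧ I = span B {e} := by
  obtain ⟨x, hxI, hx0⟩ := exists_mem_ne_zero_of_ne_bot hI.1
  obtain ⟨c, hc⟩ : ∃ c, x * c * x ≠ 0 := not_forall.mp (mt (hB x) hx0)
  have hcx : c * x ∈ I := I.smul_mem c hxI
  set ρ := LinearMap.mulRight B (c * x)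
  have hxρ : ρ x ≠ 0 := by rwa [LinearMap.mulRight_apply, ← mul_assoc]
  have hker : I ⊓ LinearMap.ker ρ = ⊥ :=
    (hI.le_iff.mp inf_le_left).resolve_right fun h => hxρ (h ▸ hxI).2
  have himg : I.map ρ = I := by
    refine (hI.le_iff.mp ?_).resolve_left fun h => hxρ ?_
    · rintro _ ⟨y, hy, rfl⟩
      exact I.smul_mem y hcx
    · simpa [h] using mem_map_of_mem (f := ρ) hxI
  obtain ⟨e, heI, hecx⟩ : c * x ∈ I.map ρ := by rwa [himg]
  simp only [ρ, LinearMap.mulRight_apply] at hecx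
  have he : IsIdempotentElem e := by
    have : e * e - e ∈ I ⊓ LinearMap.ker ρ :=
      ⟨sub_mem (I.smul_mem e heI) heI, by simp [ρ, sub_mul, mul_assoc, hecx]⟩
    exact (by simpa [hker, sub_eq_zero] using this : e * e = e)
  have he0 : e ≠ 0 := by
    rintro rfl
    have : c * x = 0 := by rw [← hecx, zero_mul]
    exact hxρ (by rw [LinearMap.mulRight_apply, this, mul_zero])
  refine ⟨e, he, ((hI.le_iff_eq ?_).mp ?_).symm⟩
  · simpa using he0
  · simpa [span_le] using heI

theorem isAtom_span_iff_isDivisionCorner (hB : IsSemiprimeRing B) (he : IsIdempotentElem e) :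
    IsAtom (span B {e}) ↔ IsDivisionCorner e := by
  constructor
  · intro h
    refine ⟨fun h0 => h.1 (by simp [h0]), fun u _ hru hu => ?_⟩
    have hue : span B {u} ≤ span B {e} :=
      span_le.mpr (by simpa using he.mem_span_singleton_iff.mpr hru)
    have hspan : span B {u} = span B {e} := (h.le_iff_eq (by simpa using hu)).mp hue
    obtain ⟨v, hv⟩ := mem_span_singleton.mp (hspan ▸ mem_span_singleton_self e)
    exact ⟨v, hv⟩
  · intro h
    refine isAtom_iff_le_of_ge.mpr ⟨by simpa using h.1, fun N hN hNe => ?_⟩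
    obtain ⟨z, hzN, hz0⟩ := exists_mem_ne_zero_of_ne_bot hN
    have hze : z * e = z := he.mem_span_singleton_iff.mp (hNe hzN)
    obtain ⟨c, hc⟩ : ∃ c, z * c * z ≠ 0 := not_forall.mp (mt (hB z) hz0)
    obtain ⟨v, hv⟩ := h.2 (e * c * z) (by rw [← mul_assoc, ← mul_assoc, he.eq])
      (by rw [mul_assoc, hze]) fun h0 => hc <| by
        rw [show z * c * z = z * (e * c * z) by rw [← mul_assoc, ← mul_assoc, hze], h0, mul_zero]
    refine span_le.mpr (Set.singleton_subset_iff.mpr ?_)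
    rw [← hv, ← mul_assoc, ← mul_assoc]
    exact N.smul_mem _ hzN

end LeftIdeal

section RightIdeal

variable {A : Type*} [Ring A] {e : A}

theorem mem_span_op_singleton {a x : A} : x ∈ span Aᵐᵒᵖ {a} ↔ ∃ b, a * b = x := by
  rw [mem_span_singleton]
  exact ⟨fun ⟨c, hc⟩ => ⟨c.unop, hc⟩, fun ⟨b, hb⟩ => ⟨op b, hb⟩⟩

theorem IsIdempotentElem.mem_span_op_singleton_iff (he : IsIdempotentElem e) {x : A} :
    x ∈ span Aᵐᵒᵖ {e} ↔ e * x = x := by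
  refine ⟨fun h => ?_, fun h => mem_span_op_singleton.mpr ⟨x, h⟩⟩
  obtain ⟨b, rfl⟩ := mem_span_op_singleton.mp h
  rw [← mul_assoc, he.eq]

theorem Submodule.mul_mem_of_mem_op {P : Submodule Aᵐᵒᵖ A} {x : A} (hx : x ∈ P) (a : A) :
    x * a ∈ P :=
  P.smul_mem (op a) hx

theorem map_opLinearEquiv_span_singleton (a : A) :
    (span Aᵐᵒᵖ {a}).map ((opLinearEquiv Aᵐᵒᵖ : A ≃ₗ[Aᵐᵒᵖ] Aᵐᵒᵖ) : A →ₗ[Aᵐᵒᵖ] Aᵐᵒᵖ) =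
      span Aᵐᵒᵖ {op a} := by
  rw [map_span]
  simp

theorem isAtom_span_op_iff_op (a : A) :
    IsAtom (span Aᵐᵒᵖ {a}) ↔ IsAtom (span Aᵐᵒᵖ {op a}) := by
  rw [← (orderIsoMapComap (opLinearEquiv Aᵐᵒᵖ : A ≃ₗ[Aᵐᵒᵖ] Aᵐᵒᵖ)).isAtom_iff,
    orderIsoMapComap_apply, map_opLinearEquiv_span_singleton]

theorem exists_isIdempotentElem_eq_span_op_of_isAtom (hA : IsSemiprimeRing A)
    {S : Submodule Aᵐᵒᵖ A} (hS : IsAtom S) : ∃ f, IsIdempotentElem f ∧ S = span Aᵐᵒᵖ {f} := by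
  set φ := orderIsoMapComap (opLinearEquiv Aᵐᵒᵖ : A ≃ₗ[Aᵐᵒᵖ] Aᵐᵒᵖ)
  obtain ⟨f, hf, hSf⟩ :=
    exists_isIdempotentElem_eq_span_of_isAtom hA.op ((φ.isAtom_iff S).mpr hS)
  refine ⟨f.unop, hf.unop, φ.injective ?_⟩
  rw [hSf, orderIsoMapComap_apply, map_opLinearEquiv_span_singleton, op_unop]

theorem isAtom_span_op_iff_isAtom_span (hA : IsSemiprimeRing A) (he : IsIdempotentElem e) :
    IsAtom (span Aᵐᵒᵖ {e}) ↔ IsAtom (span A {e}) := by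
  rw [isAtom_span_op_iff_op, isAtom_span_iff_isDivisionCorner hA.op he.op,
    isDivisionCorner_op_iff he, isAtom_span_iff_isDivisionCorner hA he]

end RightIdeal

theorem isFiniteLength_span_op_of_mem_socle {A : Type*} [Ring A] (hA : IsSemiprimeRing A) {x : A}
    (hx : x ∈ socle A) : IsFiniteLength Aᵐᵒᵖ (span Aᵐᵒᵖ {x}) := by
  rw [isFiniteLength_iff_isNoetherian_isArtinian]
  rw [socle, sSup_eq_iSup'] at hx
  refine iSup_induction _ (motive := fun x =>
    IsNoetherian Aᵐᵒᵖ (span Aᵐᵒᵖ {x}) ∧ IsArtinian Aᵐᵒᵖ (span Aᵐᵒᵖ {x})) hx ?_ ?_ ?_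
  · rintro ⟨I, hI⟩ x hx
    obtain ⟨e, he, rfl⟩ := exists_isIdempotentElem_eq_span_of_isAtom hA hI
    have : IsSimpleModule Aᵐᵒᵖ (span Aᵐᵒᵖ {e}) :=
      isSimpleModule_iff_isAtom.mpr ((isAtom_span_op_iff_isAtom_span hA he).mpr hI)
    have hx' : span Aᵐᵒᵖ {x} =
        LinearMap.range ((LinearMap.mulLeft Aᵐᵒᵖ x).comp (span Aᵐᵒᵖ {e}).subtype) := by
      rw [LinearMap.range_comp, range_subtype, map_span, Set.image_singleton,
        LinearMap.mulLeft_apply, he.mem_span_singleton_iff.mp hx]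
    rw [hx']
    exact ⟨inferInstance, inferInstance⟩
  · rw [span_zero_singleton]
    exact ⟨inferInstance, inferInstance⟩
  · rintro x y ⟨_, _⟩ ⟨_, _⟩
    have hle : span Aᵐᵒᵖ {x + y} ≤ span Aᵐᵒᵖ {x} ⊔ span Aᵐᵒᵖ {y} :=
      span_le.mpr <| Set.singleton_subset_iff.mpr <| add_mem
        (mem_sup_left (mem_span_singleton_self x)) (mem_sup_right (mem_span_singleton_self y))
    exact ⟨isNoetherian_of_le hle, isArtinian_of_le hle⟩

section RightIdealGenerator

variable {A : Type*} [Ring A]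

theorem Submodule.exists_isAtom_le {R M : Type*} [Ring R] [AddCommGroup M] [Module R M]
    {P : Submodule R M} [IsArtinian R P] (hP : P ≠ ⊥) : ∃ S, IsAtom S ∧ S ≤ P := by
  have : Nontrivial P := nontrivial_iff_ne_bot.mpr hP
  obtain ⟨T, hT⟩ := IsAtomic.exists_atom (Submodule R P)
  exact ⟨_, .of_isAtom_coe_Iic ((P.mapIic.isAtom_iff T).mpr hT), (P.mapIic T).2⟩

theorem IsIdempotentElem.eq_span_op_of_inf_ker {P : Submodule Aᵐᵒᵖ A} {f g : A}
    (hf : IsIdempotentElem f) (hg : IsIdempotentElem g) (hfP : f ∈ P)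
    (hP : P ⊓ LinearMap.ker (LinearMap.mulLeft Aᵐᵒᵖ f) = span Aᵐᵒᵖ {g}) :
    IsIdempotentElem ((1 - g) * f + g) ∧ P = span Aᵐᵒᵖ {(1 - g) * f + g} := by
  have hg' : g ∈ P ∧ f * g = 0 := by simpa [← hP] using mem_span_singleton_self (R := Aᵐᵒᵖ) g
  have heg : ((1 - g) * f + g) * g = g := by
    rw [add_mul, mul_assoc, hg'.2, mul_zero, zero_add, hg.eq]
  have he : IsIdempotentElem ((1 - g) * f + g) := by
    calc ((1 - g) * f + g) * ((1 - g) * f + g)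
        = (((1 - g) * f + g) - ((1 - g) * f + g) * g) * f + ((1 - g) * f + g) * g := by
          rw [mul_add _ ((1 - g) * f), ← mul_assoc, mul_sub, mul_one]
      _ = (1 - g) * f + g := by rw [heg, add_sub_cancel_right, mul_assoc, hf.eq]
  refine ⟨he, le_antisymm (fun x hx => he.mem_span_op_singleton_iff.mpr ?_) ?_⟩
  · have hgx : g * (x - f * x) = x - f * x := by
      refine hg.mem_span_op_singleton_iff.mp (hP ▸ ⟨sub_mem hx (P.mul_mem_of_mem_op hfP x), ?_⟩)
      simp [mul_sub, ← mul_assoc, hf.eq]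
    rw [mul_sub, sub_eq_iff_eq_add] at hgx
    rw [add_mul, hgx, sub_mul, one_mul, sub_mul, mul_assoc g f x]
    abel
  · refine span_le.mpr (Set.singleton_subset_iff.mpr ?_)
    rw [sub_mul, one_mul]
    exact add_mem (sub_mem hfP (P.mul_mem_of_mem_op hg'.1 f)) hg'.1

theorem exists_isIdempotentElem_mem_socle_eq_span (hA : IsSemiprimeRing A)
    (R : Submodule Aᵐᵒᵖ A) [IsArtinian Aᵐᵒᵖ R] :
    ∃ e, IsIdempotentElem e ∧ e ∈ socle A ∧ R = span Aᵐᵒᵖ {e} := by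
  have : WellFoundedLT (Set.Iic R) := R.mapIic.symm.strictMono.wellFoundedLT
  suffices ∀ P : Set.Iic R, ∃ e, IsIdempotentElem e ∧ e ∈ socle A ∧ P.1 = span Aᵐᵒᵖ {e} from
    this ⟨R, le_refl R⟩
  intro P
  induction P using WellFoundedLT.induction with
  | _ P ih =>
  obtain ⟨P, hPR⟩ := P
  have : IsArtinian Aᵐᵒᵖ P := isArtinian_of_le hPR
  rcases eq_or_ne P ⊥ with rfl | hP
  · exact ⟨0, .zero, zero_mem _, by simp⟩
  obtain ⟨S, hS, hSP⟩ := exists_isAtom_le hP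
  obtain ⟨f, hf, rfl⟩ := exists_isIdempotentElem_eq_span_op_of_isAtom hA hS
  have hfP : f ∈ P := hSP (mem_span_singleton_self f)
  have hfsoc : span A {f} ≤ socle A := le_sSup ((isAtom_span_op_iff_isAtom_span hA hf).mp hS)
  have hlt : P ⊓ LinearMap.ker (LinearMap.mulLeft Aᵐᵒᵖ f) < P := by
    refine inf_le_left.lt_of_ne fun h => hS.1 ?_
    have hf' : f ∈ P ⊓ LinearMap.ker (LinearMap.mulLeft Aᵐᵒᵖ f) := by rwa [h]
    rw [span_singleton_eq_bot, ← hf.eq]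
    exact hf'.2
  obtain ⟨g, hg, hgsoc, hPg⟩ := ih ⟨_, Set.mem_Iic.mpr (inf_le_left.trans hPR)⟩ hlt
  obtain ⟨he, hPe⟩ := hf.eq_span_op_of_inf_ker hg hfP hPg
  have hesoc : (1 - g) * f + g ∈ socle A :=
    add_mem ((socle A).smul_mem (1 - g) (hfsoc (mem_span_singleton_self f))) hgsoc
  exact ⟨_, he, hesoc, hPe⟩

end RightIdealGenerator

section Annihilator

variable {A : Type*} [Ring A] {L K : Submodule A A} {l r : A}

theorem mul_eq_zero_of_add_eq_one (hLK : Disjoint L K) (hl : l ∈ L) (hr : r ∈ K) (h1 : l + r = 1)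
    {y : A} (hy : y ∈ L) : y * r = 0 := by
  have hyr : y * r = y - y * l := by rw [eq_sub_iff_add_eq', ← mul_add, h1, mul_one]
  exact (mem_bot A).mp <| hLK.le_bot ⟨hyr ▸ sub_mem hy (L.smul_mem y hl), K.smul_mem y hr⟩

theorem rAnn_eq_span_of_add_eq_one (hLK : Disjoint L K) (hl : l ∈ L) (hr : r ∈ K)
    (h1 : l + r = 1) : rAnn (L : Set A) = span Aᵐᵒᵖ {r} := by
  refine le_antisymm (fun x hx => mem_span_op_singleton.mpr ⟨x, ?_⟩) ?_
  · calc r * x = l * x + r * x := by rw [hx l hl, zero_add]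
      _ = x := by rw [← add_mul, h1, one_mul]
  · exact span_le.mpr (Set.singleton_subset_iff.mpr fun y hy =>
      mul_eq_zero_of_add_eq_one hLK hl hr h1 hy)

theorem lAnn_rAnn_eq_of_add_eq_one (hLK : Disjoint L K) (hl : l ∈ L) (hr : r ∈ K)
    (h1 : l + r = 1) : lAnn (rAnn (L : Set A) : Set A) = L := by
  rw [rAnn_eq_span_of_add_eq_one hLK hl hr h1]
  refine le_antisymm (fun z hz => ?_) (fun y hy t ht => ?_)
  · have hzr : z * r = 0 := hz r (mem_span_singleton_self r)
    rw [← mul_one z, ← h1, mul_add, hzr, add_zero]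
    exact L.smul_mem z hl
  · obtain ⟨b, rfl⟩ := mem_span_op_singleton.mp ht
    rw [← mul_assoc, mul_eq_zero_of_add_eq_one hLK hl hr h1 hy, zero_mul]

end Annihilator

theorem stmt5 (A : Type*) [Ring A] (hA : IsSemiprimeRing A) (L : Submodule A A) :
    IsFredholmLeftIdeal L ↔
      L = lAnn (rAnn (L : Set A) : Set A) ∧ mlen Aᵐᵒᵖ (rAnn (L : Set A)) ≠ ⊤ := by
  rw [mlen_eq_length, Module.length_ne_top_iff]
  constructor
  · rintro ⟨a, haL, b, -, hba⟩
    have h1 : (1 : A) ∈ L ⊔ socle A := by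
      rw [← sub_add_cancel 1 (b * a), ← neg_sub]
      exact add_mem (mem_sup_right (neg_mem hba)) (mem_sup_left (L.smul_mem b haL))
    obtain ⟨K, hKsoc, hLK⟩ := exists_le_sSup_atoms_isCompl ((Ideal.eq_top_iff_one _).mpr h1)
    obtain ⟨l, hl, r, hr, hlr⟩ := mem_sup.mp (hLK.sup_eq_top ▸ mem_top : (1 : A) ∈ L ⊔ K)
    rw [lAnn_rAnn_eq_of_add_eq_one hLK.disjoint hl hr hlr,
      rAnn_eq_span_of_add_eq_one hLK.disjoint hl hr hlr]
    exact ⟨rfl, isFiniteLength_span_op_of_mem_socle hA (hKsoc hr)⟩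
  · rintro ⟨hL, hfin⟩
    have := (isFiniteLength_iff_isNoetherian_isArtinian.mp hfin).2
    obtain ⟨e, he, hesoc, hRe⟩ := exists_isIdempotentElem_mem_socle_eq_span hA (rAnn (L : Set A))
    have hfred : (1 - e) * (1 - e) - 1 ∈ socle A := by
      rw [sub_mul, one_mul, mul_sub, mul_one, he.eq, sub_self, sub_zero, sub_sub_cancel_left]
      exact neg_mem hesoc
    refine ⟨1 - e, ?_, 1 - e, hfred, hfred⟩
    rw [hL]
    intro t ht
    rw [sub_mul, one_mul, he.mem_span_op_singleton_iff.mp (hRe ▸ ht), sub_self]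
end

section
/- Let A be a unital ring and L ⊆ A a left ideal. The following are equivalent: (i) the left A-module A/L is semisimple; (ii) L is an intersection of maximal left ideals and A/L has finite length; (iii) L is a finite intersection of maximal left ideals. -/
open MulOpposite Submodule

namespace Submodule

variable {R M : Type*} [Ring R] [AddCommGroup M] [Module R M] {p : Submodule R M}

theorem jacobson_quotient_eq_bot_iff :
    Module.jacobson R (M ⧸ p) = ⊥ ↔
      ∃ S : Set (Submodule R M), (∀ m ∈ S, IsCoatom m) ∧ p = sInf S := by
  constructor
  · intro h
    refine ⟨{m | IsCoatom m ∧ p ≤ m}, fun m hm ↦ hm.1, le_antisymm (le_sInf fun m hm ↦ hm.2) ?_⟩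
    intro x hx
    rw [← ker_mkQ p, LinearMap.mem_ker, ← mem_bot R, ← h, Module.jacobson, mem_sInf]
    exact fun c hc ↦ mem_sInf.mp hx (comap p.mkQ c)
      ⟨(isCoatom_comap_iff p.mkQ_surjective).mpr hc, le_comap_mkQ p c⟩
  · rintro ⟨S, hS, rfl⟩
    refine eq_bot_iff.mpr fun x hx ↦ ?_
    obtain ⟨y, rfl⟩ := mkQ_surjective _ x
    refine (Quotient.mk_eq_zero _).mpr (mem_sInf.mpr fun m hm ↦ ?_)
    have hle : sInf S ≤ m := sInf_le hm
    have hmap : IsCoatom (map (sInf S).mkQ m) :=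
      isCoatom_map_of_ker_le (mkQ_surjective _) (by rwa [ker_mkQ]) (hS m hm)
    have : y ∈ comap (sInf S).mkQ (map (sInf S).mkQ m) := mem_sInf.mp hx _ hmap
    rwa [comap_map_mkQ, sup_eq_right.mpr hle] at this

theorem isSemisimpleModule_quotient_iInf {ι : Type*} [Finite ι] (m : ι → Submodule R M)
    (hm : ∀ i, IsCoatom (m i)) : IsSemisimpleModule R (M ⧸ ⨅ i, m i) :=
  have (i : ι) : IsSimpleModule R (M ⧸ m i) := isSimpleModule_iff_isCoatom.mpr (hm i)
  have hker : LinearMap.ker (LinearMap.pi fun i ↦ (m i).mkQ) = ⨅ i, m i := by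
    simp only [LinearMap.ker_pi, ker_mkQ]
  .of_injective (liftQ _ _ hker.ge) (LinearMap.ker_eq_bot.mp (ker_liftQ_eq_bot _ _ _ hker.le))

theorem exists_isCoatom_iInf_eq_bot [IsArtinian R M] (h : Module.jacobson R M = ⊥) :
    ∃ n, ∃ c : Fin n → Submodule R M, (∀ i, IsCoatom (c i)) ∧ ⨅ i, c i = ⊥ := by
  obtain ⟨t, ht⟩ := Finset.exists_inf_le (Subtype.val (p := fun c : Submodule R M ↦ IsCoatom c))
  refine ⟨t.card, fun i ↦ (t.equivFin.symm i).1.1, fun i ↦ (t.equivFin.symm i).1.2, ?_⟩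
  rw [eq_bot_iff, ← h]
  refine le_trans (Finset.le_inf fun c hc ↦ ?_) (le_sInf fun c hc ↦ ht ⟨c, hc⟩)
  simpa using iInf_le (fun i ↦ (t.equivFin.symm i).1.1) (t.equivFin ⟨c, hc⟩)

theorem exists_isCoatom_iInf_eq [IsArtinian R (M ⧸ p)] (h : Module.jacobson R (M ⧸ p) = ⊥) :
    ∃ n, ∃ m : Fin n → Submodule R M, (∀ i, IsCoatom (m i)) ∧ p = ⨅ i, m i := by
  obtain ⟨n, c, hc, hbot⟩ := exists_isCoatom_iInf_eq_bot h
  refine ⟨n, fun i ↦ comap p.mkQ (c i), fun i ↦ (isCoatom_comap_iff p.mkQ_surjective).mpr (hc i), ?_⟩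
  rw [← comap_iInf, hbot, comap_bot, ker_mkQ]

end Submodule

theorem stmt7 (A : Type*) [Ring A] (L : Submodule A A) :
    List.TFAE [
      IsSemisimpleModule A (A ⧸ L),
      (∃ S : Set (Submodule A A), (∀ m ∈ S, IsCoatom m) ∧ L = sInf S) ∧ mlen A (A ⧸ L) ≠ ⊤,
      ∃ n : ℕ, ∃ m : Fin n → Submodule A A, (∀ i, IsCoatom (m i)) ∧ L = ⨅ i, m i] := by
  rw [mlen_eq_length, Module.length_ne_top_iff, isFiniteLength_iff_isNoetherian_isArtinian]
  tfae_have 1 → 2 := fun _ ↦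
    ⟨jacobson_quotient_eq_bot_iff.mp (IsSemisimpleModule.jacobson_eq_bot A _), inferInstance,
      inferInstance⟩
  tfae_have 2 → 3 := by
    rintro ⟨hL, -, _⟩
    exact exists_isCoatom_iInf_eq (jacobson_quotient_eq_bot_iff.mpr hL)
  tfae_have 3 → 1 := by
    rintro ⟨n, m, hm, rfl⟩
    exact isSemisimpleModule_quotient_iInf m hm
  tfae_finish
end
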